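/- arXiv:1312.7077 — 3 statements merged into one kernel-verified Lean document; each statement's English description precedes it below -/
import Mathlib

section
/- Let M be an m × n matrix with nonnegative real entries and total sum s := ∑_{i,j} M_{ij} > 0. Let r_i := ∑_j M_{ij} denote its row sums and k_j := ∑_i M_{ij} its column sums. Then for all nonnegative vectors u ∈ ℝ^m_{≥0} and v ∈ ℝ^n_{≥0}, gKL(M ‖ u vᵀ) ≥ gKL(M ‖ (1/s) r kᵀ). That is, the outer product A_{ij} = r_i k_j / s of the row-sum and column-sum vectors, scaled by the inverse total sum, is a global minimizer of the generalized KL divergence over all rank-one nonnegative matrices. -/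
open Finset

/-- One term of the generalized KL divergence, valued in `[0, ∞]`:
a term with `m = 0` contributes `a`, a term with `m > 0` and `a = 0`
contributes `+∞`, and otherwise it is `m·log(m/a) − m + a`. -/
noncomputable def gKLterm (m a : ℝ) : EReal :=
  if m = 0 then (a : EReal)
  else if a = 0 then ⊤
  else ((m * Real.log (m / a) - m + a : ℝ) : EReal)

/-- Generalized KL divergence between (entrywise nonnegative) matrices. -/
noncomputable def gKL {ι κ : Type*} [Fintype ι] [Fintype κ]
    (M A : ι → κ → ℝ) : EReal :=
  ∑ i, ∑ j, gKLterm (M i j) (A i j)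

lemma gKLterm_nonneg {m a : ℝ} (hm : 0 ≤ m) (ha : 0 ≤ a) : 0 ≤ gKLterm m a := by
  unfold gKLterm
  split_ifs with h1 h2
  · exact_mod_cast ha
  · exact le_top
  · have hm' : 0 < m := lt_of_le_of_ne hm (Ne.symm h1)
    have ha' : 0 < a := lt_of_le_of_ne ha (Ne.symm h2)
    have hlog : Real.log (a / m) ≤ a / m - 1 := Real.log_le_sub_one_of_pos (by positivity)
    have hdiv : Real.log (m / a) = - Real.log (a / m) := by
      rw [← Real.log_inv]; congr 1; field_simp
    have hkey : (0:ℝ) ≤ m * Real.log (m/a) - m + a := by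
      rw [hdiv]
      have h2 : m * Real.log (a/m) ≤ m * (a/m - 1) :=
        mul_le_mul_of_nonneg_left hlog (le_of_lt hm')
      have h3 : m * (a/m - 1) = a - m := by field_simp
      nlinarith
    exact_mod_cast hkey

/-- The real-valued version of one gKL term, valid when `m ≠ 0 → 0 < a`. -/
noncomputable def fR (m a : ℝ) : ℝ :=
  m * Real.log m - m * Real.log a - m + a

lemma gKLterm_eq_fR {m a : ℝ} (ha : m ≠ 0 → 0 < a) :
    gKLterm m a = ((fR m a : ℝ) : EReal) := by
  unfold gKLterm fR
  by_cases hm : m = 0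
  · simp [hm]
  · have ha' := ha hm
    rw [if_neg hm, if_neg (ne_of_gt ha')]
    norm_cast
    rw [Real.log_div hm (ne_of_gt ha')]
    ring

lemma coe_sum' {ι : Type*} (s : Finset ι) (f : ι → ℝ) :
    ((∑ i ∈ s, f i : ℝ) : EReal) = ∑ i ∈ s, ((f i : ℝ) : EReal) :=
  map_sum (⟨⟨(fun x : ℝ => (x : EReal)), EReal.coe_zero⟩,
    fun a b => EReal.coe_add a b⟩ : ℝ →+ EReal) f s

lemma L1 {r c : ℝ} (hr : 0 ≤ r) (hc : 0 < c) :
    r - c ≤ r * Real.log r - r * Real.log c := by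
  rcases eq_or_lt_of_le hr with h | h
  · rw [← h]; simp; linarith
  · have hlog : Real.log (c / r) ≤ c / r - 1 := Real.log_le_sub_one_of_pos (by positivity)
    rw [Real.log_div (ne_of_gt hc) (ne_of_gt h)] at hlog
    have h2 := mul_le_mul_of_nonneg_left hlog (le_of_lt h)
    have h3 : r * (c / r - 1) = c - r := by field_simp
    nlinarith

/-- log-sum inequality. -/
lemma logsum {ι : Type*} [Fintype ι] (r u : ι → ℝ)
    (hr : ∀ i, 0 ≤ r i) (hu : ∀ i, 0 ≤ u i) (h : ∀ i, 0 < r i → 0 < u i)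
    (hspos : 0 < ∑ i, r i) (hapos : 0 < ∑ i, u i) :
    (∑ i, r i) * Real.log (∑ i, r i) - (∑ i, r i) * Real.log (∑ i, u i) ≤
      ∑ i, (r i * Real.log (r i) - r i * Real.log (u i)) := by
  set s := ∑ i, r i with hs
  set a := ∑ i, u i with ha
  have key : ∀ i ∈ univ, r i * Real.log s - r i * Real.log a + (r i - u i * (s / a))
      ≤ r i * Real.log (r i) - r i * Real.log (u i) := by
    intro i _
    rcases eq_or_lt_of_le (hu i) with h0 | h0
    · have hri : r i = 0 := by
        by_contra hri
        have := h i (lt_of_le_of_ne (hr i) (Ne.symm hri))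
        rw [← h0] at this; exact lt_irrefl 0 this
      rw [hri, ← h0]; simp
    · have hc : 0 < u i * (s / a) := by positivity
      have := L1 (hr i) hc
      have hl : Real.log (u i * (s / a)) = Real.log (u i) + Real.log s - Real.log a := by
        rw [Real.log_mul (ne_of_gt h0) (by positivity),
          Real.log_div hspos.ne' hapos.ne']
        ring
      rw [hl] at this
      nlinarith [this]
  have hsum := Finset.sum_le_sum key
  have e1 : ∑ i, (r i * Real.log s - r i * Real.log a + (r i - u i * (s / a)))
      = s * Real.log s - s * Real.log a := by
    rw [Finset.sum_add_distrib, Finset.sum_sub_distrib, Finset.sum_sub_distrib,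
      ← Finset.sum_mul, ← Finset.sum_mul, ← Finset.sum_mul, ← hs, ← ha]
    have : a * (s / a) = s := by field_simp
    rw [this]; ring
  rw [e1] at hsum
  exact hsum

/-- The outer product `A i j = rᵢ · kⱼ / s` of the row-sum and column-sum
vectors of `M`, scaled by the inverse total sum, is a global minimizer of the
generalized KL divergence `gKL(M ‖ ·)` over all rank-one nonnegative matrices
`u vᵀ`. -/
theorem gKL_rank_one_minimizer {m n : ℕ} (M : Matrix (Fin m) (Fin n) ℝ)
    (hM : ∀ i j, 0 ≤ M i j) (hs : 0 < ∑ i, ∑ j, M i j)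
    (u : Fin m → ℝ) (v : Fin n → ℝ) (hu : ∀ i, 0 ≤ u i) (hv : ∀ j, 0 ≤ v j) :
    gKL M (fun i j => (∑ j', M i j') * (∑ i', M i' j) / (∑ i', ∑ j', M i' j'))
      ≤ gKL M (fun i j => u i * v j) := by
  classical
  set r : Fin m → ℝ := fun i => ∑ j', M i j' with hrdef
  set k : Fin n → ℝ := fun j => ∑ i', M i' j with hkdef
  set s : ℝ := ∑ i', ∑ j', M i' j' with hsdef
  by_cases hfin : ∀ i j, M i j ≠ 0 → u i * v j ≠ 0
  · -- finite case
    -- basic positivity facts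
    have hrnn : ∀ i, 0 ≤ r i := fun i => Finset.sum_nonneg fun j _ => hM i j
    have hknn : ∀ j, 0 ≤ k j := fun j => Finset.sum_nonneg fun i _ => hM i j
    have hrs : ∑ i, r i = s := rfl
    have hks : ∑ j, k j = s := (Finset.sum_comm).symm
    have hrpos : ∀ i j, M i j ≠ 0 → 0 < r i := by
      intro i j hij
      have h1 : M i j ≤ r i := Finset.single_le_sum (fun j' _ => hM i j') (mem_univ j)
      exact lt_of_lt_of_le (lt_of_le_of_ne (hM i j) (Ne.symm hij)) h1
    have hkpos : ∀ i j, M i j ≠ 0 → 0 < k j := by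
      intro i j hij
      have h1 : M i j ≤ k j := Finset.single_le_sum (fun i' _ => hM i' j) (mem_univ i)
      exact lt_of_lt_of_le (lt_of_le_of_ne (hM i j) (Ne.symm hij)) h1
    have huvpos : ∀ i j, M i j ≠ 0 → 0 < u i ∧ 0 < v j := by
      intro i j hij
      have := hfin i j hij
      rcases mul_ne_zero_iff.mp this with ⟨h1, h2⟩
      exact ⟨lt_of_le_of_ne (hu i) (Ne.symm h1), lt_of_le_of_ne (hv j) (Ne.symm h2)⟩
    obtain ⟨i0, j0, hij0⟩ : ∃ i j, M i j ≠ 0 := by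
      by_contra hc
      push_neg at hc
      have : s = 0 := Finset.sum_eq_zero fun i _ => Finset.sum_eq_zero fun j _ => hc i j
      rw [this] at hs; exact lt_irrefl 0 hs
    set a : ℝ := ∑ i, u i with hadef
    set b : ℝ := ∑ j, v j with hbdef
    have hapos : 0 < a :=
      lt_of_lt_of_le (huvpos i0 j0 hij0).1
        (Finset.single_le_sum (fun i _ => hu i) (mem_univ i0))
    have hbpos : 0 < b :=
      lt_of_lt_of_le (huvpos i0 j0 hij0).2
        (Finset.single_le_sum (fun j _ => hv j) (mem_univ j0))
    have hru : ∀ i, 0 < r i → 0 < u i := by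
      intro i hi
      obtain ⟨j, -, hj⟩ := Finset.exists_ne_zero_of_sum_ne_zero (ne_of_gt hi)
      exact (huvpos i j hj).1
    have hkv : ∀ j, 0 < k j → 0 < v j := by
      intro j hj
      obtain ⟨i, -, hi⟩ := Finset.exists_ne_zero_of_sum_ne_zero (ne_of_gt hj)
      exact (huvpos i j hi).2
    -- convert both sides to real sums
    have eA : gKL M (fun i j => r i * k j / s)
        = ((∑ i, ∑ j, fR (M i j) (r i * k j / s) : ℝ) : EReal) := by
      unfold gKL
      rw [coe_sum']
      refine Finset.sum_congr rfl fun i _ => ?_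
      rw [coe_sum']
      refine Finset.sum_congr rfl fun j _ => ?_
      exact gKLterm_eq_fR fun hij => by
        have := hrpos i j hij; have := hkpos i j hij; positivity
    have eB : gKL M (fun i j => u i * v j)
        = ((∑ i, ∑ j, fR (M i j) (u i * v j) : ℝ) : EReal) := by
      unfold gKL
      rw [coe_sum']
      refine Finset.sum_congr rfl fun i _ => ?_
      rw [coe_sum']
      refine Finset.sum_congr rfl fun j _ => ?_
      exact gKLterm_eq_fR fun hij => by
        have := (huvpos i j hij).1; have := (huvpos i j hij).2; positivity
    rw [eA, eB, EReal.coe_le_coe_iff]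
    -- the real inequality
    set T : ℝ := ∑ i, ∑ j, M i j * Real.log (M i j) with hT
    have E1 : ∑ i, ∑ j, fR (M i j) (r i * k j / s)
        = T - (∑ i, r i * Real.log (r i)) - (∑ j, k j * Real.log (k j))
          + s * Real.log s := by
      have h1 : ∀ i ∈ univ, ∀ j ∈ univ, fR (M i j) (r i * k j / s) =
          M i j * Real.log (M i j) - M i j * Real.log (r i) - M i j * Real.log (k j)
            + M i j * Real.log s - M i j + r i * k j / s := by
        intro i _ j _
        by_cases hij : M i j = 0
        · simp [fR, hij]
        · have h2 : Real.log (r i * k j / s) =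
              Real.log (r i) + Real.log (k j) - Real.log s := by
            have hrp := hrpos i j hij
            have hkp := hkpos i j hij
            rw [Real.log_div (mul_pos hrp hkp).ne' hs.ne',
              Real.log_mul hrp.ne' hkp.ne']
          unfold fR
          rw [h2]; ring
      rw [Finset.sum_congr rfl fun i hi => Finset.sum_congr rfl fun j hj => h1 i hi j hj]
      simp only [Finset.sum_add_distrib, Finset.sum_sub_distrib]
      have S1 : ∑ i, ∑ j, M i j * Real.log (r i) = ∑ i, r i * Real.log (r i) := by
        refine Finset.sum_congr rfl fun i _ => ?_
        rw [← Finset.sum_mul]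
      have S2 : ∑ i, ∑ j, M i j * Real.log (k j) = ∑ j, k j * Real.log (k j) := by
        rw [Finset.sum_comm]
        refine Finset.sum_congr rfl fun j _ => ?_
        rw [← Finset.sum_mul]
      have S3 : ∑ i, ∑ j, M i j * Real.log s = s * Real.log s := by
        rw [hsdef]
        simp only [← Finset.sum_mul]
      have S4 : ∑ i, ∑ j, M i j = s := rfl
      have S5 : ∑ i, ∑ j, r i * k j / s = s := by
        have h5 : ∀ i ∈ univ, ∑ j, r i * k j / s = r i := by
          intro i _
          have : ∀ j, r i * k j / s = k j * (r i / s) := fun j => by ring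
          rw [Finset.sum_congr rfl fun j _ => this j, ← Finset.sum_mul, hks]
          field_simp
        rw [Finset.sum_congr rfl h5]
      rw [S1, S2, S3, S4, S5, ← hT]
      ring
    have E2 : ∑ i, ∑ j, fR (M i j) (u i * v j)
        = T - (∑ i, r i * Real.log (u i)) - (∑ j, k j * Real.log (v j))
          - s + a * b := by
      have h1 : ∀ i ∈ univ, ∀ j ∈ univ, fR (M i j) (u i * v j) =
          M i j * Real.log (M i j) - M i j * Real.log (u i) - M i j * Real.log (v j)
            - M i j + u i * v j := by
        intro i _ j _
        by_cases hij : M i j = 0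
        · simp [fR, hij]
        · have h2 : Real.log (u i * v j) = Real.log (u i) + Real.log (v j) :=
            Real.log_mul (ne_of_gt (huvpos i j hij).1) (ne_of_gt (huvpos i j hij).2)
          unfold fR
          rw [h2]; ring
      rw [Finset.sum_congr rfl fun i hi => Finset.sum_congr rfl fun j hj => h1 i hi j hj]
      simp only [Finset.sum_add_distrib, Finset.sum_sub_distrib]
      have S1 : ∑ i, ∑ j, M i j * Real.log (u i) = ∑ i, r i * Real.log (u i) := by
        refine Finset.sum_congr rfl fun i _ => ?_
        rw [← Finset.sum_mul]
      have S2 : ∑ i, ∑ j, M i j * Real.log (v j) = ∑ j, k j * Real.log (v j) := by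
        rw [Finset.sum_comm]
        refine Finset.sum_congr rfl fun j _ => ?_
        rw [← Finset.sum_mul]
      have S4 : ∑ i, ∑ j, M i j = s := rfl
      have S6 : ∑ i, ∑ j, u i * v j = a * b := by
        simp only [← Finset.mul_sum, ← hbdef, ← Finset.sum_mul, ← hadef]
      rw [S1, S2, S4, S6, ← hT]
    rw [E1, E2]
    -- apply the log-sum inequality twice
    have L2 : s * Real.log s - s * Real.log a ≤
        (∑ i, r i * Real.log (r i)) - (∑ i, r i * Real.log (u i)) := by
      have := logsum r u hrnn hu hru (hrs ▸ hs) hapos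
      rw [hrs, Finset.sum_sub_distrib] at this
      exact this
    have L3 : s * Real.log s - s * Real.log b ≤
        (∑ j, k j * Real.log (k j)) - (∑ j, k j * Real.log (v j)) := by
      have := logsum k v hknn hv hkv (hks ▸ hs) hbpos
      rw [hks, Finset.sum_sub_distrib] at this
      exact this
    have L4 : s * Real.log a + s * Real.log b - s * Real.log s ≤ a * b - s := by
      have h1 : Real.log (a * b / s) ≤ a * b / s - 1 :=
        Real.log_le_sub_one_of_pos (by positivity)
      have h2 : Real.log (a * b / s) = Real.log a + Real.log b - Real.log s := by
        rw [Real.log_div (by positivity) hs.ne',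
          Real.log_mul hapos.ne' hbpos.ne']
      rw [h2] at h1
      have h3 := mul_le_mul_of_nonneg_left h1 (le_of_lt hs)
      have h4 : s * (a * b / s - 1) = a * b - s := by field_simp
      nlinarith
    linarith
  · -- infinite case: RHS = ⊤
    push_neg at hfin
    obtain ⟨i0, j0, hij0, huv0⟩ := hfin
    have hterm : gKLterm (M i0 j0) (u i0 * v j0) = ⊤ := by
      unfold gKLterm
      rw [if_neg hij0, if_pos huv0]
    have h1 : (⊤ : EReal) ≤ ∑ j, gKLterm (M i0 j) (u i0 * v j) := by
      rw [← hterm]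
      exact Finset.single_le_sum
        (fun j _ => gKLterm_nonneg (hM i0 j) (mul_nonneg (hu i0) (hv j))) (mem_univ j0)
    have h2 : (⊤ : EReal) ≤ gKL M (fun i j => u i * v j) := by
      refine le_trans h1 ?_
      exact Finset.single_le_sum
        (fun i _ => Finset.sum_nonneg fun j _ =>
          gKLterm_nonneg (hM i j) (mul_nonneg (hu i) (hv j))) (mem_univ i0)
    exact le_trans le_top h2
end

section
/- Let M be an m × n matrix with nonnegative real entries, let κ ≥ 1, and suppose (L, R) with L an m × κ matrix and R a κ × n matrix, both with strictly positive entries, is a local minimizer of the function (L, R) ↦ gKL(M ‖ L R) over pairs of strictly positive matrices. Then the product LR has the same row sums and the same column sums as M: ∑_j (LR)_{ij} = ∑_j M_{ij} for every i, and ∑_i (LR)_{ij} = ∑_i M_{ij} for every j. (In particular, low-rank approximation under gKL preserves row and column sums at any positive local optimum.) -/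
open Finset

/-- Real-valued generalized KL divergence, for entrywise positive second
argument, with the convention `0 · log 0 = 0`:
`gKLR M A = ∑ᵢⱼ ( Mᵢⱼ·log(Mᵢⱼ/Aᵢⱼ) − Mᵢⱼ + Aᵢⱼ )`. -/
noncomputable def gKLR {ι κ : Type*} [Fintype ι] [Fintype κ]
    (M A : ι → κ → ℝ) : ℝ :=
  ∑ i, ∑ j,
    ((if M i j = 0 then 0 else M i j * Real.log (M i j / A i j)) - M i j + A i j)

/-!
Along the curve `t ↦ A + t • D` the `(i, j)` term of `gKL(M ‖ ·)` has derivative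
`D i j * (1 - M i j / A i j)` at `t = 0`. Multiplying row `i` of `L` by `1 + t` multiplies row `i`
of `A = L R` by `1 + t`, i.e. `D = diag(eᵢ) A`, and for this direction the derivative collapses to
`∑ j, (A i j - M i j)`. Positive pairs form an open set, so a local minimum of the constrained
problem is a local minimum along every such line, and the derivative vanishes; scaling a column
of `R` gives the column sums.
-/

lemma hasDerivAt_gKL_entry (c a d : ℝ) (ha : a ≠ 0) :
    HasDerivAt
      (fun t : ℝ => (if c = 0 then 0 else c * Real.log (c / (a + t * d))) - c + (a + t * d))
      (d * (1 - c / a)) 0 := by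
  have hlin : HasDerivAt (fun t : ℝ => a + t * d) d 0 :=
    (hasDerivAt_mul_const d).const_add a
  by_cases hc : c = 0
  · simpa [hc] using hlin
  · have ha' : a + 0 * d ≠ 0 := by simpa using ha
    have hinv : HasDerivAt (fun t : ℝ => (a + t * d)⁻¹) (-d / a ^ 2) 0 := by
      simpa using hlin.fun_inv ha'
    have hquot : HasDerivAt (fun t : ℝ => c / (a + t * d)) (c * (-d / a ^ 2)) 0 := by
      simpa only [div_eq_mul_inv] using hinv.const_mul c
    have hlog : HasDerivAt (fun t : ℝ => Real.log (c / (a + t * d)))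
        (c * (-d / a ^ 2) / (c / a)) 0 := by
      simpa using hquot.log (by simpa using div_ne_zero hc ha)
    simp only [if_neg hc]
    exact (((hlog.const_mul c).sub_const c).fun_add hlin).congr_deriv (by field_simp; ring)

lemma sum_mul_one_sub_div {ι : Type*} (s : Finset ι) (a c : ι → ℝ) (ha : ∀ i, a i ≠ 0) :
    ∑ i ∈ s, a i * (1 - c i / a i) = ∑ i ∈ s, a i - ∑ i ∈ s, c i := by
  simp only [mul_one_sub, mul_div_cancel₀ _ (ha _), sum_sub_distrib]

section

variable {ι κ : Type*} [Fintype ι] [Fintype κ]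

lemma hasDerivAt_gKLR_add_smul (M A D : Matrix ι κ ℝ) (hA : ∀ i j, A i j ≠ 0) :
    HasDerivAt (fun t : ℝ => gKLR M (A + t • D))
      (∑ i, ∑ j, D i j * (1 - M i j / A i j)) 0 := by
  simp only [gKLR, Matrix.add_apply, Matrix.smul_apply, smul_eq_mul]
  exact HasDerivAt.fun_sum fun i _ => HasDerivAt.fun_sum fun j _ =>
    hasDerivAt_gKL_entry (M i j) (A i j) (D i j) (hA i j)

lemma sum_row_eq_of_isLocalMin_gKLR_diagonal_mul [DecidableEq ι] (M A : Matrix ι κ ℝ)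
    (hA : ∀ i j, A i j ≠ 0) (i : ι)
    (hmin : IsLocalMin
      (fun t : ℝ => gKLR M (A + t • (Matrix.diagonal (Pi.single i (1 : ℝ)) * A))) 0) :
    ∑ j, A i j = ∑ j, M i j := by
  have h := hmin.hasDerivAt_eq_zero (hasDerivAt_gKLR_add_smul M A _ hA)
  simp only [Matrix.diagonal_mul, Pi.single_apply, ite_mul, one_mul, zero_mul,
    sum_ite_irrel, sum_const_zero, sum_ite_eq', mem_univ, if_true] at h
  rwa [sum_mul_one_sub_div univ (A i) (M i) (hA i), sub_eq_zero] at h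

lemma sum_col_eq_of_isLocalMin_gKLR_mul_diagonal [DecidableEq κ] (M A : Matrix ι κ ℝ)
    (hA : ∀ i j, A i j ≠ 0) (j : κ)
    (hmin : IsLocalMin
      (fun t : ℝ => gKLR M (A + t • (A * Matrix.diagonal (Pi.single j (1 : ℝ))))) 0) :
    ∑ i, A i j = ∑ i, M i j := by
  have h := hmin.hasDerivAt_eq_zero (hasDerivAt_gKLR_add_smul M A _ hA)
  rw [sum_comm] at h
  simp only [Matrix.mul_diagonal, Pi.single_apply, mul_ite, mul_one, mul_zero, ite_mul,
    zero_mul, sum_ite_irrel, sum_const_zero, sum_ite_eq', mem_univ,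
    if_true] at h
  rwa [sum_mul_one_sub_div univ (fun i => A i j) (fun i => M i j) fun i => hA i j,
    sub_eq_zero] at h

end

lemma isOpen_setOf_pos_pair {ι κ ν : Type*} [Finite ι] [Finite κ] [Finite ν] :
    IsOpen {p : Matrix ι κ ℝ × Matrix κ ν ℝ |
      (∀ i k, 0 < p.1 i k) ∧ (∀ k j, 0 < p.2 k j)} := by
  simp only [Set.ofPred_and, Set.ofPred_forall]
  refine .inter (isOpen_iInter_of_finite fun i => isOpen_iInter_of_finite fun k => ?_)
    (isOpen_iInter_of_finite fun k => isOpen_iInter_of_finite fun j => ?_)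
  · exact isOpen_lt continuous_const (by fun_prop)
  · exact isOpen_lt continuous_const (by fun_prop)

lemma IsLocalMinOn.isLocalMin_gKLR_mul_add_smul {ι κ ν : Type*} [Fintype ι] [Fintype κ]
    [Fintype ν] {M : Matrix ι ν ℝ} {L : Matrix ι κ ℝ} {R : Matrix κ ν ℝ}
    (hmin : IsLocalMinOn (fun p : Matrix ι κ ℝ × Matrix κ ν ℝ => gKLR M (p.1 * p.2))
      {p | (∀ i k, 0 < p.1 i k) ∧ (∀ k j, 0 < p.2 k j)} (L, R))
    (hL : ∀ i k, 0 < L i k) (hR : ∀ k j, 0 < R k j)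
    (D₁ : Matrix ι κ ℝ) (D₂ : Matrix κ ν ℝ) :
    IsLocalMin (fun t : ℝ => gKLR M ((L + t • D₁) * (R + t • D₂))) 0 := by
  have hloc := hmin.isLocalMin (isOpen_setOf_pos_pair.mem_nhds ⟨hL, hR⟩)
  rw [show (L, R) = (L + (0 : ℝ) • D₁, R + (0 : ℝ) • D₂) by simp] at hloc
  exact hloc.comp_continuous (g := fun t : ℝ => (L + t • D₁, R + t • D₂)) (b := 0)
    (by fun_prop)

theorem gKL_local_min_preserves_sums_general {m n κ : ℕ}
    (M : Matrix (Fin m) (Fin n) ℝ) (hκ : 1 ≤ κ)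
    (L : Matrix (Fin m) (Fin κ) ℝ) (R : Matrix (Fin κ) (Fin n) ℝ)
    (hL : ∀ i k, 0 < L i k) (hR : ∀ k j, 0 < R k j)
    (hmin : IsLocalMinOn
      (fun p : Matrix (Fin m) (Fin κ) ℝ × Matrix (Fin κ) (Fin n) ℝ =>
        gKLR M (p.1 * p.2))
      {p : Matrix (Fin m) (Fin κ) ℝ × Matrix (Fin κ) (Fin n) ℝ |
        (∀ i k, 0 < p.1 i k) ∧ (∀ k j, 0 < p.2 k j)}
      (L, R)) :
    (∀ i, ∑ j, (L * R) i j = ∑ j, M i j)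
    ∧ (∀ j, ∑ i, (L * R) i j = ∑ i, M i j) := by
  have hLR : ∀ i j, (L * R) i j ≠ 0 := fun i j =>
    (sum_pos (fun k _ => mul_pos (hL i k) (hR k j)) ⟨⟨0, hκ⟩, mem_univ _⟩).ne'
  have hline := hmin.isLocalMin_gKLR_mul_add_smul hL hR
  refine ⟨fun i => ?_, fun j => ?_⟩
  · have h := hline (Matrix.diagonal (Pi.single i (1 : ℝ)) * L) 0
    simp only [smul_zero, add_zero, Matrix.add_mul, Matrix.smul_mul] at h
    rw [Matrix.mul_assoc] at h
    exact sum_row_eq_of_isLocalMin_gKLR_diagonal_mul M (L * R) hLR i h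
  · have h := hline 0 (R * Matrix.diagonal (Pi.single j (1 : ℝ)))
    simp only [smul_zero, add_zero, Matrix.mul_add, Matrix.mul_smul] at h
    rw [← Matrix.mul_assoc] at h
    exact sum_col_eq_of_isLocalMin_gKLR_mul_diagonal M (L * R) hLR j h

/-- At any local minimum `(L, R)` (with `L`, `R` entrywise strictly positive)
of the rank-`κ` generalized KL objective `(L, R) ↦ gKL(M ‖ L R)` over pairs of
strictly positive matrices, the product `L R` has the same row sums and the
same column sums as `M`. -/
theorem gKL_local_min_preserves_sums {m n κ : ℕ}
    (M : Matrix (Fin m) (Fin n) ℝ) (hM : ∀ i j, 0 ≤ M i j) (hκ : 1 ≤ κ)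
    (L : Matrix (Fin m) (Fin κ) ℝ) (R : Matrix (Fin κ) (Fin n) ℝ)
    (hL : ∀ i k, 0 < L i k) (hR : ∀ k j, 0 < R k j)
    (hmin : IsLocalMinOn
      (fun p : Matrix (Fin m) (Fin κ) ℝ × Matrix (Fin κ) (Fin n) ℝ =>
        gKLR M (p.1 * p.2))
      {p : Matrix (Fin m) (Fin κ) ℝ × Matrix (Fin κ) (Fin n) ℝ |
        (∀ i k, 0 < p.1 i k) ∧ (∀ k j, 0 < p.2 k j)}
      (L, R)) :
    (∀ i, ∑ j, (L * R) i j = ∑ j, M i j)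
    ∧ (∀ j, ∑ i, (L * R) i j = ∑ i, M i j) :=
  gKL_local_min_preserves_sums_general M hκ L R hL hR hmin
end

section
/- Let 1 = ρ_0 ≥ ρ_1 ≥ ⋯ ≥ ρ_η ≥ ρ_{η+1} = 0 with ρ_{η+1} = 0, let 0 ≤ d* ≤ 1, and assume every context occurs, i.e. c(w') := ∑_w c(w,w') > 0 for all w' (hence S_{ρ_j}(w') > 0 for all j, w'). Let N := ∑_{w'} c(w') and assume N_+(·,·) := #{(w,w') : c(w,w') > 0} > 0. Set γ_j(w') := d*·S_{ρ_{j+1}}(w')/S_{ρ_j}(w') and P^alt(w) := N_+(w,·)/N_+(·,·) where N_+(w,·) := #{w' : c(w,w') > 0}. Suppose Z_1, …, Z_η are nonnegative matrices indexed by V × V such that for every j = 1, …, η and every word w, ∑_{w'} Z_j(w,w') = ∑_{w'} ( c(w,w')^{ρ_j} − d*·c(w,w')^{ρ_{j+1}} ) (i.e., each low-rank approximation preserves the marginal sums over contexts of the discounted powered counts). Define P_plre(w | w') := (c(w,w') − d*·c(w,w')^{ρ_1})/S_1(w') + ∑_{j=1}^{η} (∏_{h=0}^{j−1} γ_h(w'))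 · Z_j(w,w')/S_{ρ_j}(w') + (∏_{h=0}^{η} γ_h(w')) · P^alt(w). Then the lower-order marginal constraint holds: for every word w, ∑_{w'} P_plre(w | w') · (c(w')/N) = (∑_{w'} c(w,w'))/N = P̂(w). -/
open Finset

/-- Powered count with the convention `0 ^ ρ = 0` (in particular `0 ^ 0 = 0`,
so `pcount n 0` is the indicator that `n > 0`). -/
noncomputable def pcount (n : ℕ) (ρ : ℝ) : ℝ := if n = 0 then 0 else (n : ℝ) ^ ρ

lemma pcount_nonneg (n : ℕ) (r : ℝ) : 0 ≤ pcount n r := by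
  unfold pcount
  split
  · exact le_refl 0
  · exact Real.rpow_nonneg (Nat.cast_nonneg n) r

/-- Lemma 3 (marginal constraint): if each low rank matrix `Zⱼ` preserves the
marginal sums (over contexts) of the discounted powered counts, then the PLRE
smoothed conditional probability satisfies the lower-order marginal constraint
`∑_{w'} P_plre(w | w') · P̂(w') = P̂(w)`. -/
theorem plre_marginal_constraint {V : Type*} [Fintype V] [Nonempty V]
    (c : V × V → ℕ) (η : ℕ) (ρ : ℕ → ℝ) (hρ0 : ρ 0 = 1)
    (hchain : ∀ j ≤ η, ρ (j + 1) ≤ ρ j) (hlast : ρ (η + 1) = 0)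
    (dstar : ℝ) (hd0 : 0 ≤ dstar) (hd1 : dstar ≤ 1)
    (hc : ∀ w' : V, 0 < ∑ w, c (w, w'))
    (hN : 0 < (Finset.univ.filter (fun p : V × V => 0 < c p)).card)
    (Z : ℕ → V → V → ℝ)
    (hZnn : ∀ j ∈ Finset.Icc 1 η, ∀ w w' : V, 0 ≤ Z j w w')
    (hZmarg : ∀ j ∈ Finset.Icc 1 η, ∀ w : V,
      ∑ w', Z j w w'
        = ∑ w', (pcount (c (w, w')) (ρ j) - dstar * pcount (c (w, w')) (ρ (j + 1)))) :
    ∀ w : V,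
      ∑ w' : V,
        ( ((c (w, w') : ℝ) - dstar * pcount (c (w, w')) (ρ 1)) / (∑ u, (c (u, w') : ℝ))
          + (∑ j ∈ Finset.Icc 1 η,
              (∏ h ∈ Finset.range j,
                dstar * (∑ u, pcount (c (u, w')) (ρ (h + 1)))
                  / (∑ u, pcount (c (u, w')) (ρ h)))
              * (Z j w w' / (∑ u, pcount (c (u, w')) (ρ j))))
          + (∏ h ∈ Finset.range (η + 1),
              dstar * (∑ u, pcount (c (u, w')) (ρ (h + 1)))
                / (∑ u, pcount (c (u, w')) (ρ h)))
              * (((Finset.univ.filter (fun x' : V => 0 < c (w, x'))).card : ℝ)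
                  / ((Finset.univ.filter (fun p : V × V => 0 < c p)).card : ℝ)) )
        * ((∑ u, (c (u, w') : ℝ)) / (∑ x' : V, ∑ u, (c (u, x') : ℝ)))
      = (∑ w', (c (w, w') : ℝ)) / (∑ x' : V, ∑ u, (c (u, x') : ℝ)) := by
  classical
  intro w
  set S : ℕ → V → ℝ := fun j w' => ∑ u, pcount (c (u, w')) (ρ j) with hSdef
  set Palt : ℝ := ((Finset.univ.filter (fun x' : V => 0 < c (w, x'))).card : ℝ)
      / ((Finset.univ.filter (fun p : V × V => 0 < c p)).card : ℝ) with hPalt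
  have hpc_pos : ∀ (n : ℕ) (r : ℝ), 0 < n → 0 < pcount n r := by
    intro n r hn
    unfold pcount
    rw [if_neg hn.ne']
    exact Real.rpow_pos_of_pos (by exact_mod_cast hn) r
  have hSpos : ∀ j w', 0 < S j w' := by
    intro j w'
    obtain ⟨u, hu⟩ : ∃ u, 0 < c (u, w') := by
      by_contra h
      push_neg at h
      simp only [Nat.le_zero] at h
      have := hc w'
      simp [h] at this
    exact Finset.sum_pos' (fun i _ => pcount_nonneg _ _)
      ⟨u, Finset.mem_univ u, hpc_pos _ _ hu⟩
  have hSne : ∀ j w', S j w' ≠ 0 := fun j w' => (hSpos j w').ne'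
  have hpc1 : ∀ n : ℕ, pcount n (ρ 0) = (n : ℝ) := by
    intro n
    unfold pcount
    rw [hρ0]
    split <;> simp_all
  have hS0 : ∀ w', (∑ u, (c (u, w') : ℝ)) = S 0 w' := by
    intro w'
    simp only [hSdef, hpc1]
  have hpc0 : ∀ n : ℕ, pcount n (ρ (η + 1)) = if 0 < n then (1 : ℝ) else 0 := by
    intro n
    unfold pcount
    rw [hlast]
    rcases Nat.eq_zero_or_pos n with h | h
    · simp [h]
    · rw [if_neg h.ne', if_pos h, Real.rpow_zero]
  -- telescoping product
  have hprod : ∀ (w' : V) (j : ℕ),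
      (∏ h ∈ Finset.range j,
        dstar * (∑ u, pcount (c (u, w')) (ρ (h + 1))) / (∑ u, pcount (c (u, w')) (ρ h)))
      = dstar ^ j * S j w' / S 0 w' := by
    intro w' j
    induction j with
    | zero => simp [div_self (hSne 0 w')]
    | succ j ih =>
        rw [Finset.prod_range_succ, ih]
        have h1 := hSne j w'
        have h0 := hSne 0 w'
        show dstar ^ j * S j w' / S 0 w' * (dstar * S (j + 1) w' / S j w')
          = dstar ^ (j + 1) * S (j + 1) w' / S 0 w'
        field_simp
        ring
  set Nr : ℝ := ∑ x' : V, ∑ u, (c (u, x') : ℝ) with hNr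
  -- key pointwise rewrite
  have key : ∀ w' : V,
      ( ((c (w, w') : ℝ) - dstar * pcount (c (w, w')) (ρ 1)) / (∑ u, (c (u, w') : ℝ))
        + (∑ j ∈ Finset.Icc 1 η,
            (∏ h ∈ Finset.range j,
              dstar * (∑ u, pcount (c (u, w')) (ρ (h + 1)))
                / (∑ u, pcount (c (u, w')) (ρ h)))
            * (Z j w w' / (∑ u, pcount (c (u, w')) (ρ j))))
        + (∏ h ∈ Finset.range (η + 1),
            dstar * (∑ u, pcount (c (u, w')) (ρ (h + 1)))
              / (∑ u, pcount (c (u, w')) (ρ h))) * Palt )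
      * ((∑ u, (c (u, w') : ℝ)) / Nr)
      = ( ((c (w, w') : ℝ) - dstar * pcount (c (w, w')) (ρ 1))
          + (∑ j ∈ Finset.Icc 1 η, dstar ^ j * Z j w w')
          + dstar ^ (η + 1) * S (η + 1) w' * Palt ) / Nr := by
    intro w'
    rw [hS0 w', ← mul_div_assoc]
    congr 1
    rw [add_mul, add_mul, Finset.sum_mul]
    congr 1
    congr 1
    · exact div_mul_cancel₀ _ (hSne 0 w')
    · refine Finset.sum_congr rfl fun j _ => ?_
      rw [hprod w' j]
      have h0 := hSne 0 w'
      have hj := hSne j w'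
      show dstar ^ j * S j w' / S 0 w' * (Z j w w' / S j w') * S 0 w' = dstar ^ j * Z j w w'
      field_simp
    · rw [hprod w' (η + 1)]
      have h0 := hSne 0 w'
      field_simp
  simp only [key]
  rw [← Finset.sum_div]
  congr 1
  -- sum of the numerators
  rw [Finset.sum_add_distrib, Finset.sum_add_distrib]
  -- T j := ∑ w', pcount (c (w, w')) (ρ j)
  set T : ℕ → ℝ := fun j => ∑ w', pcount (c (w, w')) (ρ j) with hT
  have hsum1 : ∑ w' : V, ((c (w, w') : ℝ) - dstar * pcount (c (w, w')) (ρ 1))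
      = (∑ w' : V, (c (w, w') : ℝ)) - dstar * T 1 := by
    rw [Finset.sum_sub_distrib, ← Finset.mul_sum]
  have hsum2 : ∑ w' : V, ∑ j ∈ Finset.Icc 1 η, dstar ^ j * Z j w w'
      = dstar * T 1 - dstar ^ (η + 1) * T (η + 1) := by
    rw [Finset.sum_comm]
    have : ∀ j ∈ Finset.Icc 1 η,
        ∑ w' : V, dstar ^ j * Z j w w' = dstar ^ j * T j - dstar ^ (j + 1) * T (j + 1) := by
      intro j hj
      rw [← Finset.mul_sum, hZmarg j hj w, Finset.sum_sub_distrib, ← Finset.mul_sum,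
        mul_sub, ← mul_assoc, ← pow_succ]
    rw [Finset.sum_congr rfl this]
    have hconv : ∑ j ∈ Finset.Icc 1 η, (dstar ^ j * T j - dstar ^ (j + 1) * T (j + 1))
        = ∑ i ∈ Finset.range η,
            ((fun k => dstar ^ (k + 1) * T (k + 1)) i - (fun k => dstar ^ (k + 1) * T (k + 1)) (i + 1)) := by
      rw [show Finset.Icc 1 η = Finset.Ico 1 (η + 1) by rfl, Finset.sum_Ico_eq_sum_range]
      simp only [Nat.add_sub_cancel]
      refine Finset.sum_congr rfl fun i _ => ?_
      simp [Nat.add_comm]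
    rw [hconv, Finset.sum_range_sub' (fun k => dstar ^ (k + 1) * T (k + 1)) η]
    simp [pow_one]
  have hSlast : ∑ w' : V, S (η + 1) w'
      = ((Finset.univ.filter (fun p : V × V => 0 < c p)).card : ℝ) := by
    simp only [hSdef, hpc0]
    rw [Finset.card_filter]
    push_cast
    rw [Finset.sum_comm]
    exact (Fintype.sum_prod_type (fun p : V × V => if 0 < c p then (1 : ℝ) else 0)).symm
  have hTlast : T (η + 1)
      = ((Finset.univ.filter (fun x' : V => 0 < c (w, x'))).card : ℝ) := by
    simp only [hT, hpc0]
    rw [Finset.card_filter]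
    push_cast
    rfl
  have hsum3 : ∑ w' : V, dstar ^ (η + 1) * S (η + 1) w' * Palt
      = dstar ^ (η + 1) * T (η + 1) := by
    rw [← Finset.sum_mul, ← Finset.mul_sum, hSlast, hTlast, hPalt]
    have hNne : ((Finset.univ.filter (fun p : V × V => 0 < c p)).card : ℝ) ≠ 0 := by
      exact_mod_cast hN.ne'
    field_simp
  rw [hsum1, hsum2, hsum3]
  ring
end
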